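/- Fix a β-sequence [·]_β, let (P_n)_{n≥0} be an admissible polynomial sequence with β-generating function H(x,z) = Σ_{n≥0} (1/[n]_β!) P_n(x) z^n, and let u ∈ 𝒫₀,₁. Then the following are equivalent: (i) Σ_{n≥0} (1/[n]_β!) (D_β P_n)(x) z^n = u(z) · H(x,z) in ℂ[x][[z]]; (ii) H(x,z) = exp_β(u(z)x), i.e. Σ_{n≥0} (1/[n]_β!) P_n(x) z^n = Σ_{k≥0} (1/[k]_β!) x^k u(z)^k. -/

import Mathlib

/-!
Put `Q_n = P_n / [n]_β!`, so that `H = Σ Q_n zⁿ`. Comparing coefficients of `zⁿ`, identity (i) says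
`D_β Q_n = Σ_{i+j=n} u_i Q_j`, and since `u_0 = 0` the right-hand side involves only `Q_j` with
`j < n`. As `[m]_β ≠ 0` for `m ≥ 1`, a polynomial is determined by its `D_β`-image and its constant
term, so (i) together with `H(0,z) = 1` determines `H` completely. The series `exp_β(u(z)x)`
satisfies (i), because `D_β (xᵏ/[k]_β!) = x^(k-1)/[k-1]_β!`, and has `exp_β(u(z)·0) = 1`; hence
(i) holds exactly when `H = exp_β(u(z)x)`.
-/

/-- The β-factorial `[n]_β! = ∏_{i=1}^n [i]_β`. -/
noncomputable def betaFact (β : ℕ → ℝ) (n : ℕ) : ℝ := ∏ i ∈ Finset.range n, β (i + 1)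

open Polynomial Finset

theorem betaFact_zero (β : ℕ → ℝ) : betaFact β 0 = 1 :=
  prod_range_zero _

theorem betaFact_succ (β : ℕ → ℝ) (n : ℕ) : betaFact β (n + 1) = betaFact β n * β (n + 1) :=
  prod_range_succ _ _

theorem betaFact_pos {β : ℕ → ℝ} (hβpos : ∀ n, 1 ≤ n → 0 < β n) (n : ℕ) : 0 < betaFact β n :=
  prod_pos fun i _ => hβpos (i + 1) (Nat.le_add_left 1 i)

theorem PowerSeries.coeff_pow_eq_zero_of_lt {R : Type*} [CommSemiring R] {u : PowerSeries R}
    (hu0 : constantCoeff u = 0) {j k : ℕ} (h : j < k) : coeff j (u ^ k) = 0 :=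
  X_pow_dvd_iff.mp (pow_dvd_pow_of_dvd (X_dvd_iff.mpr hu0) k) j h

theorem PowerSeries.coeff_map_C_mul {R : Type*} [CommSemiring R] (u : PowerSeries R)
    (H : PowerSeries R[X]) (n : ℕ) :
    coeff n (map Polynomial.C u * H) =
      ∑ p ∈ antidiagonal n, Polynomial.C (coeff p.1 u) * coeff p.2 H := by
  simp only [coeff_mul, coeff_map]

section BetaDerivative

variable {R : Type*} [CommSemiring R] {b : ℕ → R} {D : Module.End R R[X]}

/-- By truncated subtraction the case `n = 0` reads `D 1 = b 0 • 1`. -/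
def IsBetaDerivative (b : ℕ → R) (D : Module.End R R[X]) : Prop :=
  ∀ n, D (X ^ n) = b n • X ^ (n - 1)

theorem IsBetaDerivative.coeff_apply (hD : IsBetaDerivative b D) (hb0 : b 0 = 0) (p : R[X])
    (j : ℕ) : (D p).coeff j = b (j + 1) * p.coeff (j + 1) := by
  induction p using Polynomial.induction_on' with
  | add p q hp hq => simp only [map_add, coeff_add, hp, hq, mul_add]
  | monomial n a =>
    rw [← C_mul_X_pow_eq_monomial, ← smul_eq_C_mul, map_smul, hD n]
    rcases n with _ | m
    · simp [hb0, coeff_one]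
    · by_cases h : j = m
      · simp [h, mul_comm]
      · simp [coeff_X_pow, h]

theorem IsBetaDerivative.eq_of_apply_eq [IsDomain R] (hD : IsBetaDerivative b D) (hb0 : b 0 = 0)
    (hb : ∀ n, b (n + 1) ≠ 0) {p q : R[X]} (h0 : p.coeff 0 = q.coeff 0) (h : D p = D q) :
    p = q := by
  ext (_ | j)
  · exact h0
  · apply mul_left_cancel₀ (hb j)
    rw [← hD.coeff_apply hb0, ← hD.coeff_apply hb0, h]

theorem IsBetaDerivative.eq_of_apply_eq_mul [IsDomain R] (hD : IsBetaDerivative b D)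
    (hb0 : b 0 = 0) (hb : ∀ n, b (n + 1) ≠ 0) {u : PowerSeries R}
    (hu0 : PowerSeries.constantCoeff u = 0) {H G : PowerSeries R[X]}
    (hH : PowerSeries.mk (fun n => D (PowerSeries.coeff n H)) = PowerSeries.map C u * H)
    (hG : PowerSeries.mk (fun n => D (PowerSeries.coeff n G)) = PowerSeries.map C u * G)
    (h0 : ∀ n, (PowerSeries.coeff n H).coeff 0 = (PowerSeries.coeff n G).coeff 0) : H = G := by
  ext1 n
  induction n using Nat.strong_induction_on with
  | _ n ih =>
    refine hD.eq_of_apply_eq hb0 hb (h0 n) ?_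
    have hHn := congrArg (PowerSeries.coeff n) hH
    have hGn := congrArg (PowerSeries.coeff n) hG
    rw [PowerSeries.coeff_mk, PowerSeries.coeff_map_C_mul] at hHn hGn
    rw [hHn, hGn]
    refine sum_congr rfl fun ⟨i, j⟩ hij => ?_
    rcases Nat.eq_zero_or_pos i with rfl | hi
    · simp [hu0]
    · rw [ih j (by rw [Finset.HasAntidiagonal.mem_antidiagonal] at hij; omega)]

end BetaDerivative

/-- `exp_β(u(z)x) = Σₖ xᵏ u(z)ᵏ / [k]_β!`, whose `zⁿ`-coefficient only involves `k ≤ n`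
when `u(0) = 0`. -/
noncomputable def betaExp (β : ℕ → ℝ) (u : PowerSeries ℂ) : PowerSeries ℂ[X] :=
  PowerSeries.mk fun n => ∑ k ∈ range (n + 1),
    (betaFact β k : ℂ)⁻¹ • (C (PowerSeries.coeff n (u ^ k)) * X ^ k)

theorem coeff_coeff_betaExp (β : ℕ → ℝ) {u : PowerSeries ℂ}
    (hu0 : PowerSeries.constantCoeff u = 0) (n j : ℕ) :
    (PowerSeries.coeff n (betaExp β u)).coeff j =
      (betaFact β j : ℂ)⁻¹ * PowerSeries.coeff n (u ^ j) := by
  simp only [betaExp, PowerSeries.coeff_mk, finsetSum_coeff, coeff_smul, coeff_C_mul_X_pow,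
    smul_eq_mul, mul_ite, mul_zero, sum_ite_eq, mem_range]
  split_ifs with h
  · rfl
  · rw [PowerSeries.coeff_pow_eq_zero_of_lt hu0 (by omega), mul_zero]

theorem IsBetaDerivative.apply_betaExp {β : ℕ → ℝ} {D : Module.End ℂ ℂ[X]}
    (hD : IsBetaDerivative (fun n => (β n : ℂ)) D) (hβ0 : β 0 = 0)
    (hβpos : ∀ n, 1 ≤ n → 0 < β n) {u : PowerSeries ℂ} (hu0 : PowerSeries.constantCoeff u = 0) :
    PowerSeries.mk (fun n => D (PowerSeries.coeff n (betaExp β u))) =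
      PowerSeries.map C u * betaExp β u := by
  ext n m
  rw [PowerSeries.coeff_mk, hD.coeff_apply (by simp [hβ0]), PowerSeries.coeff_map_C_mul,
    finsetSum_coeff]
  simp only [coeff_C_mul, coeff_coeff_betaExp β hu0]
  have hβm : (β (m + 1) : ℂ) ≠ 0 := by exact_mod_cast (hβpos (m + 1) (by omega)).ne'
  have hfact : (betaFact β m : ℂ) ≠ 0 := by exact_mod_cast (betaFact_pos hβpos m).ne'
  simp only [mul_left_comm _ (betaFact β m : ℂ)⁻¹, ← mul_sum, ← PowerSeries.coeff_mul, ← pow_succ',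
    betaFact_succ]
  push_cast
  field_simp

theorem stmt_13_general (β : ℕ → ℝ) (hβ0 : β 0 = 0) (hβpos : ∀ n, 1 ≤ n → 0 < β n)
    (P : ℕ → Polynomial ℂ)
    (hmonic : ∀ n, (P n).Monic) (hdeg : ∀ n, (P n).natDegree = n)
    (hzero : ∀ n, 1 ≤ n → (P n).coeff 0 = 0)
    (D : Module.End ℂ (Polynomial ℂ))
    (hD : ∀ n : ℕ, D (Polynomial.X ^ n) = ((β n : ℂ)) • Polynomial.X ^ (n - 1))
    (u : PowerSeries ℂ)
    (hu0 : PowerSeries.constantCoeff u = 0) :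
    (PowerSeries.mk (fun n => ((betaFact β n : ℂ))⁻¹ • D (P n)) =
      PowerSeries.map (Polynomial.C : ℂ →+* Polynomial ℂ) u *
        PowerSeries.mk (fun n => ((betaFact β n : ℂ))⁻¹ • P n))
    ↔
    (∀ n : ℕ, ((betaFact β n : ℂ))⁻¹ • P n =
      ∑ k ∈ Finset.range (n + 1),
        ((betaFact β k : ℂ))⁻¹ •
          (Polynomial.C (PowerSeries.coeff n (u ^ k)) * Polynomial.X ^ k)) := by
  set H := PowerSeries.mk fun n => (betaFact β n : ℂ)⁻¹ • P n
  have hD' : IsBetaDerivative (fun n => (β n : ℂ)) D := hD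
  have hb0 : (β 0 : ℂ) = 0 := by simp [hβ0]
  have hb (n : ℕ) : (β (n + 1) : ℂ) ≠ 0 := by exact_mod_cast (hβpos (n + 1) (by omega)).ne'
  have hDH : PowerSeries.mk (fun n => (betaFact β n : ℂ)⁻¹ • D (P n)) =
      PowerSeries.mk fun n => D (PowerSeries.coeff n H) := by
    simp only [H, PowerSeries.coeff_mk, map_smul]
  have hH0 (n : ℕ) : (PowerSeries.coeff n H).coeff 0 =
      (PowerSeries.coeff n (betaExp β u)).coeff 0 := by
    rw [coeff_coeff_betaExp β hu0, PowerSeries.coeff_mk, coeff_smul]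
    rcases n with _ | n
    · simp [(hmonic 0).natDegree_eq_zero.mp (hdeg 0), betaFact_zero]
    · simp [hzero (n + 1) (by omega), PowerSeries.coeff_one]
  have hE := hD'.apply_betaExp hβ0 hβpos hu0
  have hH_eq : H = betaExp β u ↔ ∀ n, (betaFact β n : ℂ)⁻¹ • P n =
      ∑ k ∈ range (n + 1), (betaFact β k : ℂ)⁻¹ • (C (PowerSeries.coeff n (u ^ k)) * X ^ k) := by
    simp only [PowerSeries.ext_iff, H, betaExp, PowerSeries.coeff_mk]
  rw [hDH, ← hH_eq]
  exact ⟨fun h => hD'.eq_of_apply_eq_mul hb0 hb hu0 h hE hH0, fun h => h ▸ hE⟩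

/-- for an admissible polynomial sequence with β-generating function `H` and
`u ∈ 𝒫₀,₁`, the identity `Σ (1/[n]_β!)(D_β P_n)(x) zⁿ = u(z)·H(x,z)` holds if and only if
`H(x,z) = exp_β(u(z)x)`. -/
theorem stmt_13 (β : ℕ → ℝ) (hβ0 : β 0 = 0) (hβ1 : β 1 = 1) (hβpos : ∀ n, 1 ≤ n → 0 < β n)
    (P : ℕ → Polynomial ℂ)
    (hmonic : ∀ n, (P n).Monic) (hdeg : ∀ n, (P n).natDegree = n)
    (hzero : ∀ n, 1 ≤ n → (P n).coeff 0 = 0)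
    (D : Module.End ℂ (Polynomial ℂ))
    (hD : ∀ n : ℕ, D (Polynomial.X ^ n) = ((β n : ℂ)) • Polynomial.X ^ (n - 1))
    (u : PowerSeries ℂ)
    (hu0 : PowerSeries.constantCoeff u = 0) (hu1 : PowerSeries.coeff 1 u = 1) :
    (PowerSeries.mk (fun n => ((betaFact β n : ℂ))⁻¹ • D (P n)) =
      PowerSeries.map (Polynomial.C : ℂ →+* Polynomial ℂ) u *
        PowerSeries.mk (fun n => ((betaFact β n : ℂ))⁻¹ • P n))
    ↔
    (∀ n : ℕ, ((betaFact β n : ℂ))⁻¹ • P n =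
      ∑ k ∈ Finset.range (n + 1),
        ((betaFact β k : ℂ))⁻¹ •
          (Polynomial.C (PowerSeries.coeff n (u ^ k)) * Polynomial.X ^ k)) :=
  stmt_13_general β hβ0 hβpos P hmonic hdeg hzero D hD u hu0
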